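/- arXiv:0911.2518 — 5 statements merged into one kernel-verified Lean document; each statement's English description precedes it below -/
import Mathlib

section
/- Let n : ℕ, m : ℝ, let R : Matrix (Fin 1) (Fin n) ℝ be a row vector, and let A : Matrix (Fin n) (Fin n) ℝ be symmetric. Consider the symmetric (n+2)×(n+2) real matrix G whose block form is [[1, 1, 0], [1, m, R], [0, Rᵀ, A]] (first row is (1, 1, 0, …, 0), second row is (1, m, R), and remaining rows are (0, Rᵀ, A)). Then sig(G) = 1 + sig(G'), where G' is the symmetric (n+1)×(n+1) matrix with block form [[m − 1, R], [Rᵀ, A]]. -/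
open Matrix

open Classical in
/-- The signature of a real symmetric (Hermitian) matrix: the number of positive
eigenvalues minus the number of negative eigenvalues, counted with multiplicity. -/
noncomputable def matSig {ι : Type} [Fintype ι] [DecidableEq ι] (M : Matrix ι ι ℝ) : ℤ :=
  if h : M.IsHermitian then
    ((Finset.univ.filter fun i => 0 < h.eigenvalues i).card : ℤ)
      - ((Finset.univ.filter fun i => h.eigenvalues i < 0).card : ℤ)
  else 0

/-!
Sylvester's law of inertia: the number of positive eigenvalues of a real symmetric matrix `M` is
the largest dimension of a subspace on which `x ↦ xᵀ M x` is positive definite (diagonalize `M`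
and compare with a diagonal matrix), and likewise for `-M`. Hence the signature is invariant
under congruence `M ↦ Pᵀ M P` and additive on block sums. Subtracting the first row and column
of `G` from the second is such a congruence, turning `G` into `1 ⊕ G'`.
-/

open Finset

lemma card_filter_sumElim {ι κ α : Type*} [Fintype ι] [Fintype κ] (r : α → Prop)
    [DecidablePred r] (a : ι → α) (b : κ → α) :
    #{x | r (Sum.elim a b x)} = #{i | r (a i)} + #{j | r (b j)} := by
  rw [card_filter, card_filter, card_filter, Fintype.sum_sum_type]
  rfl

namespace Matrix

variable {ι κ : Type*} [Fintype ι] [Fintype κ]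

def posDefFinranks (M : Matrix ι ι ℝ) : Set ℕ :=
  {k | ∃ W : Submodule ℝ (ι → ℝ), (∀ x ∈ W, x ≠ 0 → 0 < x ⬝ᵥ M *ᵥ x) ∧ Module.finrank ℝ W = k}

lemma dotProduct_transpose_mul_mul_mulVec (M : Matrix κ κ ℝ) (P : Matrix κ ι ℝ) (x : ι → ℝ) :
    x ⬝ᵥ (Pᵀ * M * P) *ᵥ x = (P *ᵥ x) ⬝ᵥ M *ᵥ (P *ᵥ x) := by
  rw [← mulVec_mulVec, ← mulVec_mulVec, dotProduct_mulVec, vecMul_transpose]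

lemma posDefFinranks_transpose_mul_mul_subset (M : Matrix κ κ ℝ) {P : Matrix κ ι ℝ}
    (hP : Function.Injective P.mulVec) : posDefFinranks (Pᵀ * M * P) ⊆ posDefFinranks M := by
  rintro _ ⟨W, hW, rfl⟩
  refine ⟨W.map P.mulVecLin, ?_, (Submodule.equivMapOfInjective _ hP W).finrank_eq.symm⟩
  rintro _ ⟨x, hx, rfl⟩ hPx
  rw [mulVecLin_apply, ← dotProduct_transpose_mul_mul_mulVec]
  exact hW x hx (by rintro rfl; simp at hPx)

lemma posDefFinranks_transpose_mul_mul [DecidableEq ι] (M : Matrix ι ι ℝ) {P : Matrix ι ι ℝ}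
    (hP : IsUnit P) : posDefFinranks (Pᵀ * M * P) = posDefFinranks M := by
  refine (posDefFinranks_transpose_mul_mul_subset M
    (mulVec_injective_iff_isUnit.mpr hP)).antisymm ?_
  have hdet := (isUnit_iff_isUnit_det P).mp hP
  have hM : (P⁻¹)ᵀ * (Pᵀ * M * P) * P⁻¹ = M := by
    rw [← Matrix.mul_assoc, ← Matrix.mul_assoc, ← transpose_mul, mul_nonsing_inv P hdet,
      transpose_one, Matrix.one_mul, Matrix.mul_assoc, mul_nonsing_inv P hdet, Matrix.mul_one]
  conv_lhs => rw [← hM]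
  exact posDefFinranks_transpose_mul_mul_subset _
    (mulVec_injective_iff_isUnit.mpr (isUnit_nonsing_inv_iff.mpr hP))

lemma dotProduct_diagonal_mulVec_self [DecidableEq ι] (d x : ι → ℝ) :
    x ⬝ᵥ diagonal d *ᵥ x = ∑ i, d i * x i ^ 2 := by
  simp only [dotProduct, mulVec_diagonal]
  exact sum_congr rfl fun i _ => by ring

lemma mem_upperBounds_posDefFinranks_diagonal [DecidableEq ι] (d : ι → ℝ) :
    #{i | 0 < d i} ∈ upperBounds (posDefFinranks (diagonal d)) := by
  rintro _ ⟨W, hW, rfl⟩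
  let restrict := (LinearMap.funLeft ℝ ℝ (Subtype.val : {i // 0 < d i} → ι)) ∘ₗ W.subtype
  have hinj : Function.Injective restrict := by
    rw [← LinearMap.ker_eq_bot, LinearMap.ker_eq_bot']
    rintro ⟨x, hx⟩ hx0
    by_contra hne
    have hvanish : ∀ i, 0 < d i → x i = 0 := fun i hi => congrFun hx0 ⟨i, hi⟩
    have hnonpos : x ⬝ᵥ diagonal d *ᵥ x ≤ 0 := by
      rw [dotProduct_diagonal_mulVec_self]
      refine sum_nonpos fun i _ => ?_
      rcases lt_or_ge 0 (d i) with hi | hi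
      · simp [hvanish i hi]
      · exact mul_nonpos_of_nonpos_of_nonneg hi (sq_nonneg _)
    exact hnonpos.not_gt (hW x hx fun h => hne (Subtype.ext h))
  simpa [Fintype.card_subtype] using LinearMap.finrank_le_finrank_of_injective hinj

lemma mem_posDefFinranks_diagonal [DecidableEq ι] (d : ι → ℝ) :
    #{i | 0 < d i} ∈ posDefFinranks (diagonal d) := by
  let restrict := LinearMap.funLeft ℝ ℝ (Subtype.val : {i // ¬ 0 < d i} → ι)
  refine ⟨LinearMap.ker restrict, fun x hx hx0 => ?_, ?_⟩
  · have hvanish : ∀ i, ¬ 0 < d i → x i = 0 := fun i hi => congrFun hx ⟨i, hi⟩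
    obtain ⟨j, hj⟩ := Function.ne_iff.mp hx0
    have hdj : 0 < d j := by_contra fun h => hj (hvanish j h)
    rw [dotProduct_diagonal_mulVec_self]
    refine sum_pos' (fun i _ => ?_) ⟨j, mem_univ j, mul_pos hdj (sq_pos_of_ne_zero hj)⟩
    by_cases hi : 0 < d i
    · positivity
    · simp [hvanish i hi]
  · have hsurj : LinearMap.range restrict = ⊤ := LinearMap.range_eq_top.mpr
      (LinearMap.funLeft_surjective_of_injective _ _ _ Subtype.val_injective)
    have hrank := LinearMap.finrank_range_add_finrank_ker restrict
    rw [hsurj, finrank_top, Module.finrank_fintype_fun_eq_card,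
      Module.finrank_fintype_fun_eq_card, Fintype.card_subtype] at hrank
    have hsplit := card_filter_add_card_filter_not (s := univ) (fun i => 0 < d i)
    rw [card_univ] at hsplit
    omega

lemma isGreatest_posDefFinranks_diagonal [DecidableEq ι] (d : ι → ℝ) :
    IsGreatest (posDefFinranks (diagonal d)) #{i | 0 < d i} :=
  ⟨mem_posDefFinranks_diagonal d, mem_upperBounds_posDefFinranks_diagonal d⟩

lemma IsHermitian.diagonal_eigenvalues_eq [DecidableEq ι] {A : Matrix ι ι ℝ}
    (hA : A.IsHermitian) :
    diagonal hA.eigenvalues =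
      (hA.eigenvectorUnitary : Matrix ι ι ℝ)ᵀ * A * hA.eigenvectorUnitary := by
  have := hA.conjStarAlgAut_star_eigenvectorUnitary
  rwa [Unitary.conjStarAlgAut_star_apply, star_eq_conjTranspose,
    conjTranspose_eq_transpose_of_trivial, RCLike.ofReal_real_eq_id, Function.id_comp,
    eq_comm] at this

lemma IsHermitian.isGreatest_posDefFinranks [DecidableEq ι] {M : Matrix ι ι ℝ}
    (hM : M.IsHermitian) : IsGreatest (posDefFinranks M) #{i | 0 < hM.eigenvalues i} := by
  have h := isGreatest_posDefFinranks_diagonal hM.eigenvalues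
  rwa [hM.diagonal_eigenvalues_eq, posDefFinranks_transpose_mul_mul _ Unitary.isUnit_coe] at h

lemma IsHermitian.isGreatest_posDefFinranks_neg [DecidableEq ι] {M : Matrix ι ι ℝ}
    (hM : M.IsHermitian) : IsGreatest (posDefFinranks (-M)) #{i | hM.eigenvalues i < 0} := by
  have h := isGreatest_posDefFinranks_diagonal fun i => -hM.eigenvalues i
  rw [← diagonal_neg, hM.diagonal_eigenvalues_eq, ← Matrix.neg_mul, ← Matrix.mul_neg,
    posDefFinranks_transpose_mul_mul _ Unitary.isUnit_coe] at h
  simpa only [neg_pos] using h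

end Matrix

section Signature

variable {ι κ : Type} [Fintype ι] [DecidableEq ι] [Fintype κ] [DecidableEq κ]

lemma Matrix.IsHermitian.matSig_eq {M : Matrix ι ι ℝ} (hM : M.IsHermitian) :
    matSig M = #{i | 0 < hM.eigenvalues i} - #{i | hM.eigenvalues i < 0} := by
  rw [matSig, dif_pos hM]

lemma matSig_eq_of_isGreatest {M : Matrix ι ι ℝ} (hM : M.IsHermitian) {p q : ℕ}
    (hp : IsGreatest (posDefFinranks M) p) (hq : IsGreatest (posDefFinranks (-M)) q) :
    matSig M = p - q := by
  rw [hM.matSig_eq, hM.isGreatest_posDefFinranks.unique hp,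
    hM.isGreatest_posDefFinranks_neg.unique hq]

lemma matSig_transpose_mul_mul {M : Matrix ι ι ℝ} (hM : M.IsHermitian) {P : Matrix ι ι ℝ}
    (hP : IsUnit P) : matSig (Pᵀ * M * P) = matSig M := by
  have hPMP : (Pᵀ * M * P).IsHermitian := by
    simpa only [conjTranspose_eq_transpose_of_trivial] using isHermitian_conjTranspose_mul_mul P hM
  rw [hM.matSig_eq]
  apply matSig_eq_of_isGreatest hPMP
  · rw [posDefFinranks_transpose_mul_mul _ hP]
    exact hM.isGreatest_posDefFinranks
  · rw [← Matrix.neg_mul, ← Matrix.mul_neg, posDefFinranks_transpose_mul_mul _ hP]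
    exact hM.isGreatest_posDefFinranks_neg

lemma matSig_diagonal (d : ι → ℝ) : matSig (diagonal d) = #{i | 0 < d i} - #{i | d i < 0} := by
  refine matSig_eq_of_isGreatest (isHermitian_diagonal d) (isGreatest_posDefFinranks_diagonal d) ?_
  rw [diagonal_neg]
  simpa only [neg_pos] using isGreatest_posDefFinranks_diagonal fun i => -d i

lemma matSig_one : matSig (1 : Matrix ι ι ℝ) = Fintype.card ι := by
  simp [← diagonal_one, matSig_diagonal]

lemma matSig_fromBlocks_zero_zero {A : Matrix ι ι ℝ} {B : Matrix κ κ ℝ} (hA : A.IsHermitian)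
    (hB : B.IsHermitian) : matSig (fromBlocks A 0 0 B) = matSig A + matSig B := by
  set U := (hA.eigenvectorUnitary : Matrix ι ι ℝ)
  set V := (hB.eigenvectorUnitary : Matrix κ κ ℝ)
  have hUV : IsUnit (fromBlocks U 0 0 V) := by
    rw [isUnit_iff_isUnit_det, det_fromBlocks_zero₂₁, IsUnit.mul_iff, ← isUnit_iff_isUnit_det,
      ← isUnit_iff_isUnit_det]
    exact ⟨Unitary.isUnit_coe, Unitary.isUnit_coe⟩
  have hdiag : diagonal (Sum.elim hA.eigenvalues hB.eigenvalues) =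
      (fromBlocks U 0 0 V)ᵀ * fromBlocks A 0 0 B * fromBlocks U 0 0 V := by
    rw [← fromBlocks_diagonal, hA.diagonal_eigenvalues_eq, hB.diagonal_eigenvalues_eq,
      fromBlocks_transpose, fromBlocks_multiply, fromBlocks_multiply]
    simp [U, V]
  rw [← matSig_transpose_mul_mul (hA.fromBlocks (by simp) hB) hUV, ← hdiag, matSig_diagonal,
    hA.matSig_eq, hB.matSig_eq, card_filter_sumElim (fun x : ℝ => 0 < x),
    card_filter_sumElim (fun x : ℝ => x < 0)]
  push_cast
  ring

end Signature

/-- The matrix computation underlying the fact that the differential of the diagramless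
chain complex increases the signature grading by exactly `+1`:
`sig [[1,1,0],[1,m,R],[0,Rᵀ,A]] = 1 + sig [[m-1,R],[Rᵀ,A]]`. -/
theorem signature_differential_step {n : ℕ} (m : ℝ)
    (R : Matrix (Fin 1) (Fin n) ℝ) (A : Matrix (Fin n) (Fin n) ℝ) (hA : A.IsSymm) :
    matSig (Matrix.fromBlocks
        (1 : Matrix (Fin 1) (Fin 1) ℝ)
        (Matrix.fromCols (1 : Matrix (Fin 1) (Fin 1) ℝ) (0 : Matrix (Fin 1) (Fin n) ℝ))
        (Matrix.fromRows (1 : Matrix (Fin 1) (Fin 1) ℝ) (0 : Matrix (Fin n) (Fin 1) ℝ))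
        (Matrix.fromBlocks (Matrix.of fun _ _ => m) R Rᵀ A))
      = 1 + matSig (Matrix.fromBlocks (Matrix.of fun _ _ => m - 1) R Rᵀ A) := by
  set G' := fromBlocks (of fun _ _ => m - 1) R Rᵀ A
  have hG' : G'.IsHermitian := by
    rw [IsHermitian, conjTranspose_eq_transpose_of_trivial, fromBlocks_transpose,
      transpose_transpose, hA.eq]
    congr 1
  set P : Matrix (Fin 1 ⊕ (Fin 1 ⊕ Fin n)) (Fin 1 ⊕ (Fin 1 ⊕ Fin n)) ℝ :=
    fromBlocks 1 (fromCols 1 0) 0 1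
  have hP : IsUnit P := by
    rw [isUnit_iff_isUnit_det, det_fromBlocks_zero₂₁]
    simp
  have hG : fromBlocks 1 (fromCols 1 0) (fromRows 1 0) (fromBlocks (of fun _ _ => m) R Rᵀ A) =
      Pᵀ * fromBlocks 1 0 0 G' * P := by
    simp only [P, G', fromBlocks_transpose, transpose_one, transpose_zero, transpose_fromCols,
      fromBlocks_multiply, Matrix.one_mul, Matrix.mul_one, Matrix.zero_mul, Matrix.mul_zero,
      add_zero, zero_add, fromRows_mul_fromCols, fromBlocks_add]
    congr
    ext i j
    rw [Subsingleton.elim i j]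
    simp
  rw [hG, matSig_transpose_mul_mul (isHermitian_one.fromBlocks (by simp) hG') hP,
    matSig_fromBlocks_zero_zero isHermitian_one hG', matSig_one, Fintype.card_fin, Nat.cast_one]
end

section
/- Let R = ℤ[h,t] and A = R[x]/(x² − h·x − t), with x the adjoined root. Let Δ : A → A ⊗_R A be the R-linear map determined on the basis {1, x} by Δ(1) = 1⊗x + x⊗1 − h•(1⊗1) and Δ(x) = t•(1⊗1) + x⊗x. Then Δ is coassociative: for every a ∈ A, applying Δ to the left tensor factor of Δ(a) equals (under the canonical associativity isomorphism (A ⊗_R A) ⊗_R A ≅ A ⊗_R (A ⊗_R A)) the result of applying Δ to the right tensor factor of Δ(a); that is, (Δ ⊗ Id) ∘ Δ = (Id ⊗ Δ) ∘ Δ. -/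
open TensorProduct

noncomputable section

/-- The ground ring `R = ℤ[h,t]`, the polynomial ring in two variables over `ℤ`. -/
abbrev Rht : Type := MvPolynomial (Fin 2) ℤ

/-- The variable `h` of `ℤ[h,t]`. -/
def hR : Rht := MvPolynomial.X 0

/-- The variable `t` of `ℤ[h,t]`. -/
def tR : Rht := MvPolynomial.X 1

/-- The polynomial `x² − h·x − t` over `ℤ[h,t]`. -/
def pht : Polynomial Rht :=
  Polynomial.X ^ 2 - Polynomial.C hR * Polynomial.X - Polynomial.C tR

/-- The algebra `A = R[x]/(x² − h·x − t)` of the universal rank-two Frobenius system. -/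
abbrev Aht : Type := AdjoinRoot pht

/-- The adjoined root `x` of `A = R[x]/(x² − h·x − t)`. -/
def xA : Aht := AdjoinRoot.root pht

end

/-! Both sides of coassociativity are `R`-linear in `a`, and `A` is free on `1, x`, so it suffices
to compare them on `1` and `x`. There the identity is a formal computation in `A ⊗ A ⊗ A` that
never uses the relation `x² = h x + t`. -/

lemma pht_monic : pht.Monic := by
  unfold pht
  monicity!

lemma pht_natDegree : pht.natDegree = 2 := by
  unfold pht
  compute_degree!

theorem PowerBasis.linearMap_ext_of_dim_eq_two {R S M : Type*} [CommRing R] [Ring S]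
    [Algebra R S] [AddCommMonoid M] [Module R M] (pb : PowerBasis R S) (hdim : pb.dim = 2)
    {φ ψ : S →ₗ[R] M} (h1 : φ 1 = ψ 1) (hgen : φ pb.gen = ψ pb.gen) : φ = ψ := by
  refine pb.basis.ext fun i ↦ ?_
  rw [pb.basis_eq_pow]
  obtain ⟨i, hi⟩ := i
  obtain rfl | rfl : i = 0 ∨ i = 1 := by omega
  · simpa using h1
  · simpa using hgen

section CoassocOnGenerators

variable {R M : Type*} [CommRing R] [AddCommGroup M] [Module R M] {e x : M} {h t : R}
  {Δ : M →ₗ[R] M ⊗[R] M}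

theorem assoc_map_comul_apply_eq_of_comul_eq (m : M) (hm : m = e ∨ m = x)
    (hΔe : Δ e = e ⊗ₜ x + x ⊗ₜ e - h • (e ⊗ₜ e)) (hΔx : Δ x = t • (e ⊗ₜ e) + x ⊗ₜ x) :
    TensorProduct.assoc R M M M (TensorProduct.map Δ LinearMap.id (Δ m))
      = TensorProduct.map LinearMap.id Δ (Δ m) := by
  rcases hm with rfl | rfl <;>
  · simp only [hΔe, hΔx, map_add, map_sub, map_smul, TensorProduct.map_tmul, LinearMap.id_apply,
      add_tmul, sub_tmul, tmul_add, tmul_sub, ← smul_tmul', tmul_smul, TensorProduct.assoc_tmul]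
    module

end CoassocOnGenerators

/-- The comultiplication `Δ` of the universal rank-two Frobenius system `𝓕₅`, determined
by `Δ(1) = 1⊗x + x⊗1 − h•(1⊗1)` and `Δ(x) = t•(1⊗1) + x⊗x`, is coassociative:
`(Δ ⊗ Id) ∘ Δ = (Id ⊗ Δ) ∘ Δ` under the canonical associativity isomorphism. -/
theorem comul_coassociative
    (Δ : Aht →ₗ[Rht] Aht ⊗[Rht] Aht)
    (hΔ1 : Δ 1 = (1 : Aht) ⊗ₜ[Rht] xA + xA ⊗ₜ[Rht] (1 : Aht)
      - hR • ((1 : Aht) ⊗ₜ[Rht] (1 : Aht)))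
    (hΔx : Δ xA = tR • ((1 : Aht) ⊗ₜ[Rht] (1 : Aht)) + xA ⊗ₜ[Rht] xA) :
    ∀ a : Aht,
      (TensorProduct.assoc Rht Aht Aht Aht)
          ((TensorProduct.map Δ LinearMap.id) (Δ a))
        = (TensorProduct.map LinearMap.id Δ) (Δ a) := by
  have hcoassoc := fun m hm ↦ assoc_map_comul_apply_eq_of_comul_eq m hm hΔ1 hΔx
  have key : (TensorProduct.assoc Rht Aht Aht Aht).toLinearMap ∘ₗ
      TensorProduct.map Δ LinearMap.id ∘ₗ Δ = TensorProduct.map LinearMap.id Δ ∘ₗ Δ :=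
    (AdjoinRoot.powerBasis' pht_monic).linearMap_ext_of_dim_eq_two pht_natDegree
      (hcoassoc 1 (.inl rfl)) (hcoassoc xA (.inr rfl))
  exact LinearMap.congr_fun key
end

section
/- Fix k : ℕ and let m : Fin k → Bool be a crosscut state. For i, j : Fin k with i ≠ j, m(i) = false, and m(j) = false, the following sign identity holds: (−1)^{α(m, i)} · (−1)^{α(update m i true, j)} = − (−1)^{α(m, j)} · (−1)^{α(update m j true, i)}. -/
/-!
Deactivating a crosscut changes the counts `α` only at later positions, where it adds one.
So for `i < j`, deactivating `i` first flips the sign attached to `j`, while deactivating `j`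
first leaves the sign attached to `i` unchanged; the two composites thus differ by exactly one
sign.
-/

/-- For a crosscut state `m : Fin k → Bool` (with `true` = inactive, `false` = active),
`crossAlpha m j` is the number of inactive crosscuts preceding position `j`. -/
def crossAlpha {k : ℕ} (m : Fin k → Bool) (j : Fin k) : ℕ :=
  (Finset.univ.filter fun l : Fin k => l < j ∧ m l = true).card

section crossAlpha

variable {k : ℕ} (m : Fin k → Bool) {i j : Fin k}

theorem crossAlpha_update_of_le (h : j ≤ i) (b : Bool) :
    crossAlpha (Function.update m i b) j = crossAlpha m j := by
  unfold crossAlpha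
  congr 1
  refine Finset.filter_congr fun l _ => ?_
  rcases eq_or_ne l i with rfl | hl
  · simp [not_lt.2 h]
  · rw [Function.update_of_ne hl]

theorem crossAlpha_update_of_lt (h : i < j) (hi : m i = false) :
    crossAlpha (Function.update m i true) j = crossAlpha m j + 1 := by
  unfold crossAlpha
  have hfilter : (Finset.univ.filter fun l : Fin k => l < j ∧ Function.update m i true l = true)
      = insert i (Finset.univ.filter fun l : Fin k => l < j ∧ m l = true) := by
    ext l
    rcases eq_or_ne l i with rfl | hl
    · simp [h]
    · simp [hl]
  rw [hfilter, Finset.card_insert_of_notMem (by simp [hi])]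

theorem signs_anticommute_of_lt (h : i < j) (hi : m i = false) :
    (-1 : ℤ) ^ crossAlpha m i * (-1) ^ crossAlpha (Function.update m i true) j
      = -((-1 : ℤ) ^ crossAlpha m j * (-1) ^ crossAlpha (Function.update m j true) i) := by
  rw [crossAlpha_update_of_lt m h hi, crossAlpha_update_of_le m h.le]
  ring

end crossAlpha

/-- The sign identity expressing that the signed local differentials of the diagramless
chain complex negatively commute, so that `d ∘ d = 0`. -/
theorem signs_anticommute {k : ℕ} (m : Fin k → Bool) (i j : Fin k) (hij : i ≠ j)
    (hi : m i = false) (hj : m j = false) :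
    (-1 : ℤ) ^ crossAlpha m i * (-1) ^ crossAlpha (Function.update m i true) j
      = -((-1 : ℤ) ^ crossAlpha m j * (-1) ^ crossAlpha (Function.update m j true) i) := by
  rcases hij.lt_or_gt with h | h
  · exact signs_anticommute_of_lt m h hi
  · rw [signs_anticommute_of_lt m h hj, neg_neg]
end

section
/- Fix k : ℕ and i : Fin k with i + 1 < k, and let σ be the transposition of positions i and i+1 in Fin k. For a crosscut state m : Fin k → Bool, define s(m) = −1 if m(i) = true and m(i+1) = true, and s(m) = 1 otherwise. Then for every j : Fin k with m(j) = false, the following sign identity holds: (−1)^{α(m, j)} · s(update m j true) = s(m) · (−1)^{α(m ∘ σ, σ(j))}. -/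
/-- The weight of the map `ψ_σ` on a crosscut state: `-1` if both the crosscuts at
positions `i` and `i'` are inactive, and `+1` otherwise. -/
def psiSign {k : ℕ} (i i' : Fin k) (m : Fin k → Bool) : ℤ :=
  if m i = true ∧ m i' = true then -1 else 1

section CrossAlpha

variable {k : ℕ}

theorem crossAlpha_succ (m : Fin k → Bool) (j : Fin k) (h : (j : ℕ) + 1 < k) :
    crossAlpha m ⟨(j : ℕ) + 1, h⟩ = crossAlpha m j + (m j).toNat := by
  have hlt : ∀ l : Fin k, l < ⟨(j : ℕ) + 1, h⟩ ↔ l < j ∨ l = j := by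
    intro l
    simp only [Fin.lt_def, Fin.ext_iff]
    omega
  unfold crossAlpha
  cases hmj : m j with
  | false =>
    rw [Bool.toNat_false, add_zero]
    congr 1
    ext l
    simp only [Finset.mem_filter, Finset.mem_univ, true_and, hlt]
    constructor
    · rintro ⟨hl | rfl, hml⟩
      exacts [⟨hl, hml⟩, absurd hml (by simp [hmj])]
    · exact fun ⟨hl, hml⟩ => ⟨Or.inl hl, hml⟩
  | true =>
    rw [Bool.toNat_true, ← Finset.card_insert_of_notMem (a := j) (by simp)]
    congr 1
    ext l
    simp only [Finset.mem_filter, Finset.mem_univ, true_and, Finset.mem_insert, hlt]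
    constructor
    · rintro ⟨hl | rfl, hml⟩
      exacts [Or.inr ⟨hl, hml⟩, Or.inl rfl]
    · rintro (rfl | ⟨hl, hml⟩)
      exacts [⟨Or.inr rfl, hmj⟩, ⟨Or.inl hl, hml⟩]

theorem crossAlpha_comp_perm (m : Fin k → Bool) (e : Equiv.Perm (Fin k)) (j : Fin k) :
    crossAlpha (m ∘ e) j = (Finset.univ.filter fun l : Fin k => e.symm l < j ∧ m l = true).card :=
  Finset.card_equiv e fun l => by simp

theorem swap_succ_lt_iff {i j : Fin k} (h : (i : ℕ) + 1 < k) (hj : j ≠ ⟨(i : ℕ) + 1, h⟩)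
    (l : Fin k) : Equiv.swap i ⟨(i : ℕ) + 1, h⟩ l < j ↔ l < j := by
  rw [Equiv.swap_apply_def]
  split_ifs <;> simp only [Fin.ext_iff, Fin.lt_def, ne_eq] at * <;> omega

theorem crossAlpha_comp_swap_succ {i j : Fin k} (h : (i : ℕ) + 1 < k)
    (hj : j ≠ ⟨(i : ℕ) + 1, h⟩) (m : Fin k → Bool) :
    crossAlpha (m ∘ Equiv.swap i ⟨(i : ℕ) + 1, h⟩) j = crossAlpha m j := by
  rw [crossAlpha_comp_perm, Equiv.symm_swap]
  simp only [swap_succ_lt_iff h hj, crossAlpha]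

end CrossAlpha

section PsiSign

variable {k : ℕ} {i i' : Fin k} {m : Fin k → Bool}

theorem psiSign_of_left_eq_false (hm : m i = false) : psiSign i i' m = 1 := by
  simp [psiSign, hm]

theorem psiSign_of_right_eq_false (hm : m i' = false) : psiSign i i' m = 1 := by
  simp [psiSign, hm]

theorem psiSign_update_left (hne : i ≠ i') :
    psiSign i i' (Function.update m i true) = (-1) ^ (m i').toNat := by
  cases hm : m i' <;> simp [psiSign, Function.update_of_ne hne.symm, hm]

theorem psiSign_update_right (hne : i ≠ i') :
    psiSign i i' (Function.update m i' true) = (-1) ^ (m i).toNat := by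
  cases hm : m i <;> simp [psiSign, Function.update_of_ne hne, hm]

theorem psiSign_update_of_ne {j : Fin k} (hi : j ≠ i) (hi' : j ≠ i') (b : Bool) :
    psiSign i i' (Function.update m j b) = psiSign i i' m := by
  simp [psiSign, Function.update_of_ne hi.symm, Function.update_of_ne hi'.symm]

end PsiSign

/-- The sign identity expressing that `ψ_σ`, for `σ` the adjacent transposition of the
crosscuts `i` and `i+1`, commutes with the signed local differentials, i.e. is a chain
map between the Bar-Natan complexes for the two crosscut orderings. -/
theorem psi_sigma_chain_map {k : ℕ} (i : Fin k) (h : (i : ℕ) + 1 < k)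
    (m : Fin k → Bool) (j : Fin k) (hj : m j = false) :
    (-1 : ℤ) ^ crossAlpha m j * psiSign i ⟨(i : ℕ) + 1, h⟩ (Function.update m j true)
      = psiSign i ⟨(i : ℕ) + 1, h⟩ m *
          (-1) ^ crossAlpha (m ∘ (Equiv.swap i ⟨(i : ℕ) + 1, h⟩))
            ((Equiv.swap i ⟨(i : ℕ) + 1, h⟩) j) := by
  set i' : Fin k := ⟨(i : ℕ) + 1, h⟩ with hi'
  have hne : i ≠ i' := by simp [hi', Fin.ext_iff]
  by_cases hji : j = i
  · subst hji
    rw [Equiv.swap_apply_left, crossAlpha_succ _ _ h, crossAlpha_comp_swap_succ h hne,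
      psiSign_update_left hne, psiSign_of_left_eq_false hj, Function.comp_apply,
      Equiv.swap_apply_left, pow_add]
    ring
  by_cases hji' : j = i'
  · subst hji'
    rw [Equiv.swap_apply_right, crossAlpha_succ _ _ h, crossAlpha_comp_swap_succ h hne,
      psiSign_update_right hne, psiSign_of_right_eq_false hj, pow_add, mul_assoc, ← pow_add,
      Even.neg_one_pow ⟨_, rfl⟩, mul_one, one_mul]
  · rw [Equiv.swap_apply_of_ne_of_ne hji hji', crossAlpha_comp_swap_succ h hji',
      psiSign_update_of_ne hji hji']
    ring
end

section
/- Let A = ℤ[x]/(x²) and let Δ : A → A ⊗_ℤ A be the ℤ-linear map determined on the basis {1, x} by Δ(1) = 1⊗x + x⊗1 and Δ(x) = x⊗x. Then Δ is injective, and the quotient ℤ-module (A ⊗_ℤ A) / range(Δ) is free of rank 2. -/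
open TensorProduct

noncomputable section

/-- The polynomial `x²` over `ℤ`. -/
def pSq : Polynomial ℤ := Polynomial.X ^ 2

/-- The algebra `A = ℤ[x]/(x²)` of the Frobenius system `𝓕₁`. -/
abbrev Asq : Type := AdjoinRoot pSq

/-- The adjoined root `x` of `A = ℤ[x]/(x²)`. -/
def xSq : Asq := AdjoinRoot.root pSq

end

/-!
Write `e i j = b i ⊗ₜ b j` for the tensor square of a basis `b = (1, x)`. Then `Δ` sends
`b 0 ↦ e 0 1 + e 1 0` and `b 1 ↦ e 1 1`, so with `π z = (z₀₀, z₀₁ - z₁₀)` the sequence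
`0 → A → A ⊗ A → ℤ² → 0` is exact and split: `ρ z = z₁₀ • b 0 + z₁₁ • b 1` retracts `Δ`,
`σ (u, v) = u • e 0 0 + v • e 0 1` is a section of `π`, and `Δ ∘ ρ + σ ∘ π = id`.
Hence `Δ` is injective and its cokernel is `ℤ²`.
-/

namespace Module.Basis

variable {R M : Type*} [CommRing R] [AddCommGroup M] [Module R M] (b : Basis (Fin 2) R M)

/-- For the basis `(1, x)` of `R[x]/(x²)` this is the comultiplication `Δ` of `𝓕₁`. -/
noncomputable def dualComul : M →ₗ[R] M ⊗[R] M :=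
  b.constr R ![b 0 ⊗ₜ b 1 + b 1 ⊗ₜ b 0, b 1 ⊗ₜ b 1]

noncomputable def dualComulRetraction : M ⊗[R] M →ₗ[R] M :=
  ((b.tensorProduct b).coord (1, 0)).smulRight (b 0) +
    ((b.tensorProduct b).coord (1, 1)).smulRight (b 1)

noncomputable def dualComulCoker : M ⊗[R] M →ₗ[R] R × R :=
  ((b.tensorProduct b).coord (0, 0)).prod
    ((b.tensorProduct b).coord (0, 1) - (b.tensorProduct b).coord (1, 0))

noncomputable def dualComulCokerSection : R × R →ₗ[R] M ⊗[R] M :=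
  (LinearMap.toSpanSingleton R _ (b 0 ⊗ₜ b 0)).coprod (LinearMap.toSpanSingleton R _ (b 0 ⊗ₜ b 1))

@[simp]
lemma dualComul_apply_zero : b.dualComul (b 0) = b 0 ⊗ₜ b 1 + b 1 ⊗ₜ b 0 := by
  simp [dualComul]

@[simp]
lemma dualComul_apply_one : b.dualComul (b 1) = b 1 ⊗ₜ b 1 := by
  simp [dualComul]

lemma dualComulRetraction_comp_dualComul :
    b.dualComulRetraction ∘ₗ b.dualComul = LinearMap.id := by
  refine b.ext fun i => ?_
  fin_cases i <;> simp [dualComulRetraction]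

lemma dualComulCoker_comp_dualComul :
    b.dualComulCoker ∘ₗ b.dualComul = 0 := by
  refine b.ext fun i => ?_
  fin_cases i <;> simp [dualComulCoker]

lemma dualComulCoker_comp_dualComulCokerSection :
    b.dualComulCoker ∘ₗ b.dualComulCokerSection = LinearMap.id := by
  ext <;> simp [dualComulCoker, dualComulCokerSection]

lemma dualComul_comp_retraction_add_cokerSection_comp_coker :
    b.dualComul ∘ₗ b.dualComulRetraction +
      b.dualComulCokerSection ∘ₗ b.dualComulCoker = LinearMap.id := by
  refine (b.tensorProduct b).ext fun ⟨i, j⟩ => ?_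
  fin_cases i <;> fin_cases j <;> simp [dualComulRetraction, dualComulCoker,
    dualComulCokerSection]

lemma dualComul_injective : Function.Injective b.dualComul :=
  Function.LeftInverse.injective (g := b.dualComulRetraction)
    (LinearMap.congr_fun b.dualComulRetraction_comp_dualComul)

lemma dualComulCoker_surjective : Function.Surjective b.dualComulCoker :=
  Function.RightInverse.surjective (g := b.dualComulCokerSection)
    (LinearMap.congr_fun b.dualComulCoker_comp_dualComulCokerSection)

lemma exact_dualComul_dualComulCoker :
    Function.Exact b.dualComul b.dualComulCoker := by
  refine LinearMap.exact_of_comp_of_mem_range b.dualComulCoker_comp_dualComul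
    fun z hz => ⟨b.dualComulRetraction z, ?_⟩
  simpa [hz] using LinearMap.congr_fun b.dualComul_comp_retraction_add_cokerSection_comp_coker z

end Module.Basis

lemma monic_pSq : pSq.Monic :=
  Polynomial.monic_X_pow 2

lemma natDegree_pSq : pSq.natDegree = 2 := by
  simp [pSq]

noncomputable def basisAsq : Module.Basis (Fin 2) ℤ Asq :=
  (AdjoinRoot.powerBasis' monic_pSq).basis.reindex (finCongr natDegree_pSq)

lemma basisAsq_apply (i : Fin 2) : basisAsq i = xSq ^ (i : ℕ) := by
  rw [basisAsq, Module.Basis.reindex_apply, PowerBasis.basis_eq_pow]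
  rfl

lemma eq_dualComul_basisAsq (Δ : Asq →ₗ[ℤ] Asq ⊗[ℤ] Asq)
    (hΔ1 : Δ 1 = (1 : Asq) ⊗ₜ[ℤ] xSq + xSq ⊗ₜ[ℤ] (1 : Asq)) (hΔx : Δ xSq = xSq ⊗ₜ[ℤ] xSq) :
    Δ = basisAsq.dualComul := by
  have hb0 : basisAsq 0 = 1 := by simpa using basisAsq_apply 0
  have hb1 : basisAsq 1 = xSq := by simpa using basisAsq_apply 1
  refine basisAsq.ext fun i => ?_
  fin_cases i
  · change Δ (basisAsq 0) = basisAsq.dualComul (basisAsq 0)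
    rw [Module.Basis.dualComul_apply_zero, hb0, hb1, hΔ1]
  · change Δ (basisAsq 1) = basisAsq.dualComul (basisAsq 1)
    rw [Module.Basis.dualComul_apply_one, hb1, hΔx]

/-- The comultiplication `Δ` of `𝓕₁`, determined by `Δ(1) = 1⊗x + x⊗1` and
`Δ(x) = x⊗x`, is injective, and the quotient `(A ⊗_ℤ A) / range Δ` is a free
`ℤ`-module of rank `2`. -/
theorem comul_injective_quotient_free_rank_two
    (Δ : Asq →ₗ[ℤ] Asq ⊗[ℤ] Asq)
    (hΔ1 : Δ 1 = (1 : Asq) ⊗ₜ[ℤ] xSq + xSq ⊗ₜ[ℤ] (1 : Asq))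
    (hΔx : Δ xSq = xSq ⊗ₜ[ℤ] xSq) :
    Function.Injective Δ ∧
      Module.Free ℤ ((Asq ⊗[ℤ] Asq) ⧸ LinearMap.range Δ) ∧
      Module.finrank ℤ ((Asq ⊗[ℤ] Asq) ⧸ LinearMap.range Δ) = 2 := by
  have hΔ : ⇑Δ = basisAsq.dualComul :=
    congrArg DFunLike.coe (eq_dualComul_basisAsq Δ hΔ1 hΔx)
  have hexact : Function.Exact Δ basisAsq.dualComulCoker :=
    hΔ ▸ basisAsq.exact_dualComul_dualComulCoker
  let e := hexact.linearEquivOfSurjective basisAsq.dualComulCoker_surjective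
  exact ⟨hΔ ▸ basisAsq.dualComul_injective, .of_equiv e.symm, by simp [e.finrank_eq]⟩
end
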